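/- The Hyperbric H³ equals the square {(a,b) ∈ ℝ² : |a| + |b| ≤ 2/(3√3)}; that is, for c = (a,b) ∈ ℝ², the sequence (H_{3,c}^m((0,0)))_{m≥1} is bounded if and only if |a| + |b| ≤ 2/(3√3). -/

import Mathlib

/-- Hyperbolic (duplex) multiplication on ℝ². -/
def hMul (u v : ℝ × ℝ) : ℝ × ℝ := (u.1 * v.1 + u.2 * v.2, u.2 * v.1 + u.1 * v.2)

/-- p-fold ⋄-power of a hyperbolic number. -/
def hPow (w : ℝ × ℝ) : ℕ → ℝ × ℝ
  | 0 => (1, 0)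
  | n + 1 => hMul (hPow w n) w

/-- The hyperbolic polynomial H_{p,c}(w) = w^{⋄p} + c. -/
def hQ (p : ℕ) (c : ℝ × ℝ) (w : ℝ × ℝ) : ℝ × ℝ := hPow w p + c

/-!
In the coordinates `(x + y, x - y)` the product `⋄` becomes componentwise multiplication, so the
orbit of `(0, 0)` under `H_{3,(a,b)}` splits into the two real orbits of `0` under `t ↦ t³ + (a + b)`
and `t ↦ t³ + (a - b)`. A real orbit of this kind is bounded iff `|c| ≤ 2/(3√3)`: in that case
`[-1/√3, 1/√3]` is invariant, and for `c > 2/(3√3)` the bound `t³ - t ≥ -2/(3√3)` on `t ≥ 0`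
makes the orbit increase by at least `c - 2/(3√3)` at each step (`c < -2/(3√3)` is symmetric).
Finally `max |a + b| |a - b| = |a| + |b|`.
-/

lemma max_abs_add_abs_sub (a b : ℝ) : max |a + b| |a - b| = |a| + |b| := by
  grind [abs_of_nonneg, abs_of_nonpos]

lemma exists_forall_one_le_le_iff (u : ℕ → ℝ) :
    (∃ M, ∀ m, 1 ≤ m → u m ≤ M) ↔ ∃ M, ∀ m, u m ≤ M := by
  refine ⟨fun ⟨M, hM⟩ => ⟨max M (u 0), fun m => ?_⟩, fun ⟨M, hM⟩ => ⟨M, fun m _ => hM m⟩⟩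
  rcases Nat.eq_zero_or_pos m with rfl | hm
  · exact le_max_right _ _
  · exact (hM m hm).trans (le_max_left _ _)

lemma hMul_fst_add_snd (u v : ℝ × ℝ) :
    (hMul u v).1 + (hMul u v).2 = (u.1 + u.2) * (v.1 + v.2) := by
  simp only [hMul]; ring

lemma hMul_fst_sub_snd (u v : ℝ × ℝ) :
    (hMul u v).1 - (hMul u v).2 = (u.1 - u.2) * (v.1 - v.2) := by
  simp only [hMul]; ring

lemma hPow_fst_add_snd (w : ℝ × ℝ) (n : ℕ) : (hPow w n).1 + (hPow w n).2 = (w.1 + w.2) ^ n := by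
  induction n with
  | zero => simp [hPow]
  | succ n ih => rw [hPow, hMul_fst_add_snd, ih, pow_succ]

lemma hPow_fst_sub_snd (w : ℝ × ℝ) (n : ℕ) : (hPow w n).1 - (hPow w n).2 = (w.1 - w.2) ^ n := by
  induction n with
  | zero => simp [hPow]
  | succ n ih => rw [hPow, hMul_fst_sub_snd, ih, pow_succ]

lemma semiconj_fst_add_snd_hQ (p : ℕ) (c : ℝ × ℝ) :
    Function.Semiconj (fun w : ℝ × ℝ => w.1 + w.2) (hQ p c) (fun t => t ^ p + (c.1 + c.2)) := by
  intro w
  simp only [hQ, Prod.fst_add, Prod.snd_add, ← hPow_fst_add_snd]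
  ring

lemma semiconj_fst_sub_snd_hQ (p : ℕ) (c : ℝ × ℝ) :
    Function.Semiconj (fun w : ℝ × ℝ => w.1 - w.2) (hQ p c) (fun t => t ^ p + (c.1 - c.2)) := by
  intro w
  simp only [hQ, Prod.fst_add, Prod.snd_add, ← hPow_fst_sub_snd]
  ring

lemma abs_fst_add_abs_snd_le_two_mul_norm (w : ℝ × ℝ) : |w.1| + |w.2| ≤ 2 * ‖w‖ := by
  have h1 : |w.1| ≤ ‖w‖ := norm_fst_le w
  have h2 : |w.2| ≤ ‖w‖ := norm_snd_le w
  linarith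

lemma norm_le_abs_fst_add_abs_snd (w : ℝ × ℝ) : ‖w‖ ≤ |w.1| + |w.2| := by
  rw [Prod.norm_def]
  exact max_le_add_of_nonneg (norm_nonneg _) (norm_nonneg _)

lemma exists_bound_norm_iterate_hQ_iff (p : ℕ) (c w : ℝ × ℝ) :
    (∃ M, ∀ m, ‖(hQ p c)^[m] w‖ ≤ M) ↔
      (∃ M, ∀ m, |(fun t => t ^ p + (c.1 + c.2))^[m] (w.1 + w.2)| ≤ M) ∧
      (∃ M, ∀ m, |(fun t => t ^ p + (c.1 - c.2))^[m] (w.1 - w.2)| ≤ M) := by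
  have hsum m := (semiconj_fst_add_snd_hQ p c).iterate_right m w
  have hdiff m := (semiconj_fst_sub_snd_hQ p c).iterate_right m w
  simp only [← hsum, ← hdiff]
  constructor
  · rintro ⟨M, hM⟩
    have h m : max |((hQ p c)^[m] w).1 + ((hQ p c)^[m] w).2|
        |((hQ p c)^[m] w).1 - ((hQ p c)^[m] w).2| ≤ 2 * M := by
      rw [max_abs_add_abs_sub]
      exact (abs_fst_add_abs_snd_le_two_mul_norm _).trans (by linarith [hM m])
    exact ⟨⟨2 * M, fun m => (le_max_left _ _).trans (h m)⟩,
      ⟨2 * M, fun m => (le_max_right _ _).trans (h m)⟩⟩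
  · rintro ⟨⟨M₁, hM₁⟩, ⟨M₂, hM₂⟩⟩
    refine ⟨max M₁ M₂, fun m => (norm_le_abs_fst_add_abs_snd _).trans ?_⟩
    rw [← max_abs_add_abs_sub]
    exact max_le_max (hM₁ m) (hM₂ m)

lemma iterate_pow_add_neg_zero {p : ℕ} (hp : Odd p) (c : ℝ) (m : ℕ) :
    (fun t : ℝ => t ^ p + -c)^[m] 0 = -(fun t : ℝ => t ^ p + c)^[m] 0 := by
  have h : Function.Semiconj Neg.neg (fun t : ℝ => t ^ p + c) (fun t => t ^ p + -c) :=
    fun t => by simp only [hp.neg_pow, neg_add]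
  simpa using (h.iterate_right m 0).symm

lemma abs_iterate_cube_add_le {c : ℝ} (hc : |c| ≤ 2 / (3 * √3)) (m : ℕ) :
    |(fun t : ℝ => t ^ 3 + c)^[m] 0| ≤ 1 / √3 := by
  induction m with
  | zero => simp
  | succ m ih =>
    rw [Function.iterate_succ_apply']
    have hcube : |(fun t : ℝ => t ^ 3 + c)^[m] 0| ^ 3 ≤ (1 / √3) ^ 3 :=
      pow_le_pow_left₀ (abs_nonneg _) ih 3
    have hsplit : (1 / √3) ^ 3 + 2 / (3 * √3) = 1 / √3 := by
      have : √3 ^ 2 = 3 := Real.sq_sqrt (by norm_num)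
      field_simp
      linear_combination -this
    calc |((fun t : ℝ => t ^ 3 + c)^[m] 0) ^ 3 + c|
        ≤ |(fun t : ℝ => t ^ 3 + c)^[m] 0| ^ 3 + |c| := by rw [← abs_pow]; exact abs_add_le _ _
      _ ≤ 1 / √3 := by linarith

lemma neg_le_cube_sub_self {x : ℝ} (hx : 0 ≤ x) : -(2 / (3 * √3)) ≤ x ^ 3 - x := by
  have h3 : √3 ^ 2 = 3 := Real.sq_sqrt (by norm_num)
  have hfactor : x ^ 3 - x + 2 / (3 * √3) = (x - 1 / √3) ^ 2 * (x + 2 / √3) := by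
    field_simp
    linear_combination (2 - 3 * x * √3) * h3
  have : 0 ≤ (x - 1 / √3) ^ 2 * (x + 2 / √3) := by positivity
  linarith

lemma le_iterate_cube_add {c : ℝ} (hc : 2 / (3 * √3) < c) (m : ℕ) :
    m * (c - 2 / (3 * √3)) ≤ (fun t : ℝ => t ^ 3 + c)^[m] 0 := by
  induction m with
  | zero => simp
  | succ m ih =>
    rw [Function.iterate_succ_apply', Nat.cast_succ]
    have hx : 0 ≤ (fun t : ℝ => t ^ 3 + c)^[m] 0 :=
      le_trans (mul_nonneg m.cast_nonneg (by linarith)) ih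
    linarith [neg_le_cube_sub_self hx]

lemma exists_bound_iterate_cube_add_iff (c : ℝ) :
    (∃ M, ∀ m, |(fun t : ℝ => t ^ 3 + c)^[m] 0| ≤ M) ↔ |c| ≤ 2 / (3 * √3) := by
  refine ⟨fun ⟨M, hM⟩ => ?_, fun hc => ⟨1 / √3, abs_iterate_cube_add_le hc⟩⟩
  by_contra! hc
  obtain ⟨m, hm⟩ := exists_nat_gt (M / (|c| - 2 / (3 * √3)))
  have hgrowth := le_iterate_cube_add hc m
  rw [div_lt_iff₀ (by linarith)] at hm
  have habs : |(fun t : ℝ => t ^ 3 + |c|)^[m] 0| ≤ M := by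
    rcases abs_choice c with h | h <;> rw [h]
    · exact hM m
    · rw [iterate_pow_add_neg_zero (by decide), abs_neg]; exact hM m
  linarith [le_abs_self ((fun t : ℝ => t ^ 3 + |c|)^[m] 0)]

theorem hyperbric_eq_square (a b : ℝ) :
    (∃ M : ℝ, ∀ m : ℕ, 1 ≤ m → ‖(hQ 3 (a, b))^[m] (0, 0)‖ ≤ M) ↔
      |a| + |b| ≤ 2 / (3 * Real.sqrt 3) := by
  rw [exists_forall_one_le_le_iff, exists_bound_norm_iterate_hQ_iff]
  simp only [add_zero, sub_zero, exists_bound_iterate_cube_add_iff, ← max_abs_add_abs_sub,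
    max_le_iff]
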